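/- Let Δ ∈ ℝ with exp(iΔ) ≠ 1. Then for every α ∈ ℂ, |⟪c(α), c(exp(iΔ) · α)⟫|² = exp(−|α|² · |1 − exp(iΔ)|²), and this quantity tends to 0 as |α| → ∞. -/

import Mathlib

/-!
Summing the Fock-basis coefficients of two coherent states gives an exponential series,
`⟪c(α), c(β)⟫ = exp(-|α|²/2 - |β|²/2 + conj α · β)`, whence `|⟪c(α), c(β)⟫|² = exp(-|α - β|²)`.
For `β = e^{iΔ} α` the distance `|α - β| = |α| · |1 - e^{iΔ}|` grows linearly in `|α|`
as soon as `e^{iΔ} ≠ 1`, so the fidelity decays like a Gaussian.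
-/

/-- The coherent state vector `c(α) ∈ ℓ²(ℕ, ℂ)`, whose `n`-th Fock-basis
coefficient is `exp(−|α|²/2) · αⁿ / √(n!)`. -/
noncomputable def coherent (α : ℂ) : lp (fun _ : ℕ => ℂ) 2 :=
  ⟨fun n => Complex.exp (-(((‖α‖) ^ 2 : ℝ) : ℂ) / 2) * α ^ n /
      (Real.sqrt (Nat.factorial n) : ℂ), by
    apply memℓp_gen
    have hs : Summable (fun n : ℕ =>
        (Real.exp (-(‖α‖) ^ 2 / 2)) ^ 2 * ((‖α‖ ^ 2) ^ n / (Nat.factorial n))) := by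
      exact (Real.summable_pow_div_factorial _).mul_left _
    apply hs.congr
    intro n
    have hfac : (0 : ℝ) < Real.sqrt (Nat.factorial n) := by positivity
    have h2 : (2 : ENNReal).toReal = ((2 : ℕ) : ℝ) := by norm_num
    rw [h2, Real.rpow_natCast]
    simp only [norm_div, norm_mul]
    rw [Complex.norm_exp]
    have hre : (-(((‖α‖) ^ 2 : ℝ) : ℂ) / 2).re = -(‖α‖) ^ 2 / 2 := by
      simp [sq]
    rw [hre, norm_pow, Complex.norm_real, Real.norm_eq_abs, abs_of_pos hfac, eq_comm, div_pow, mul_pow,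
      Real.sq_sqrt (Nat.cast_nonneg _)]
    ring⟩

open Complex ComplexConjugate

lemma coherent_apply (α : ℂ) (n : ℕ) :
    coherent α n = exp (-((‖α‖ ^ 2 : ℝ) : ℂ) / 2) * α ^ n / (Real.sqrt n.factorial : ℂ) :=
  rfl

lemma coherent_apply_mul_conj_coherent_apply (α β : ℂ) (n : ℕ) :
    coherent β n * conj (coherent α n) =
      exp (-((‖α‖ ^ 2 : ℝ) : ℂ) / 2 - ((‖β‖ ^ 2 : ℝ) : ℂ) / 2) * ((conj α * β) ^ n / n.factorial) := by
  have hsqrt : ((Real.sqrt n.factorial : ℝ) : ℂ) * (Real.sqrt n.factorial : ℝ) = n.factorial := by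
    rw [← ofReal_mul, Real.mul_self_sqrt (Nat.cast_nonneg _), ofReal_natCast]
  have hexp : conj (exp (-((‖α‖ ^ 2 : ℝ) : ℂ) / 2)) = exp (-((‖α‖ ^ 2 : ℝ) : ℂ) / 2) := by
    rw [← exp_conj, map_div₀, map_neg, conj_ofReal, map_ofNat]
  rw [coherent_apply, coherent_apply, map_div₀, map_mul, map_pow, hexp, conj_ofReal,
    div_mul_div_comm, mul_mul_mul_comm, ← mul_pow, hsqrt, sub_eq_add_neg, neg_div, exp_add]
  ring

theorem inner_coherent (α β : ℂ) :
    inner ℂ (coherent α) (coherent β) =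
      exp (-((‖α‖ ^ 2 : ℝ) : ℂ) / 2 - ((‖β‖ ^ 2 : ℝ) : ℂ) / 2 + conj α * β) := by
  simp only [lp.inner_eq_tsum, RCLike.inner_apply, coherent_apply_mul_conj_coherent_apply]
  rw [tsum_mul_left, exp_add, exp_eq_exp_ℂ, NormedSpace.exp_eq_tsum_div]

theorem norm_inner_coherent_sq (α β : ℂ) :
    ‖inner ℂ (coherent α) (coherent β)‖ ^ 2 = Real.exp (-‖α - β‖ ^ 2) := by
  have hexponent : 2 * (-((‖α‖ ^ 2 : ℝ) : ℂ) / 2 - ((‖β‖ ^ 2 : ℝ) : ℂ) / 2 + conj α * β).re =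
      -‖α - β‖ ^ 2 := by
    have hre : (conj α * β).re = (α * conj β).re := by
      rw [← conj_re, map_mul, conj_conj, mul_comm]
    simp only [add_re, sub_re, div_ofNat_re, neg_re, ofReal_re, hre, Complex.sq_norm, normSq_sub]
    ring
  rw [inner_coherent, norm_exp, ← Real.exp_nat_mul, Nat.cast_ofNat, hexponent]

theorem tendsto_exp_neg_mul_norm_sq_comap_norm {E : Type*} [SeminormedAddGroup E] {c : ℝ}
    (hc : 0 < c) :
    Filter.Tendsto (fun x : E => Real.exp (-‖x‖ ^ 2 * c))
      (Filter.comap (fun x : E => ‖x‖) Filter.atTop) (nhds 0) := by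
  have hsq : Filter.Tendsto (fun r : ℝ => -r ^ 2 * c) Filter.atTop Filter.atBot := by
    simpa only [neg_mul] using Filter.tendsto_neg_atBot_iff.mpr
      ((Filter.tendsto_pow_atTop two_ne_zero).atTop_mul_const hc)
  exact (Real.tendsto_exp_atBot.comp hsq).comp Filter.tendsto_comap

/-- The fidelity between a coherent state and its mis-rotated version equals
`exp(−|α|²|1 − e^{iΔ}|²)` and tends to `0` as `|α| → ∞` when `e^{iΔ} ≠ 1`. -/
theorem miscalibrated_phase_rotation_fidelity (Δ : ℝ)
    (hΔ : Complex.exp (Complex.I * (Δ : ℂ)) ≠ 1) :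
    (∀ α : ℂ,
      (‖(inner ℂ (coherent α) (coherent (Complex.exp (Complex.I * (Δ : ℂ)) * α)) : ℂ)‖) ^ 2 =
        Real.exp (-(‖α‖) ^ 2 * (‖1 - Complex.exp (Complex.I * (Δ : ℂ))‖) ^ 2)) ∧
    Filter.Tendsto
      (fun α : ℂ =>
        (‖(inner ℂ (coherent α) (coherent (Complex.exp (Complex.I * (Δ : ℂ)) * α)) : ℂ)‖) ^ 2)
      (Filter.comap (fun z : ℂ => ‖z‖) Filter.atTop) (nhds 0) := by
  have fidelity (α : ℂ) :
      ‖inner ℂ (coherent α) (coherent (exp (I * Δ) * α))‖ ^ 2 =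
        Real.exp (-‖α‖ ^ 2 * ‖1 - exp (I * Δ)‖ ^ 2) := by
    rw [norm_inner_coherent_sq, ← one_sub_mul, norm_mul, mul_pow, neg_mul, mul_comm]
  have hgap : 0 < ‖1 - exp (I * Δ)‖ ^ 2 := by
    have := norm_pos_iff.mpr (sub_ne_zero.mpr hΔ.symm)
    positivity
  refine ⟨fidelity, ?_⟩
  simpa only [fidelity] using tendsto_exp_neg_mul_norm_sq_comap_norm hgap
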